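/- arXiv:1201.3567 — 2 statements merged into one kernel-verified Lean document; each statement's English description precedes it below -/
import Mathlib

section
/- Let ζ and ψ be Young functions such that ψ̃(x) = ψ(x)/x is strictly increasing with ψ̃(0) = 0 and ψ̃(∞) = ∞. Define κ by κ^{-1}(x) = ζ^{-1}(x)·ψ̃^{-1}(x) and let ϑ = κ^{-1} ∘ ψ̃. Then there exist constants K, x₀ ∈ (0,∞) such that K^{-1}x ≤ (ϑ*)^{-1}(x)·ψ̃^{-1}(κ(x)) ≤ 2x for all x ≥ x₀. -/
open Filter Topology MeasureTheory
open scoped ENNReal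
noncomputable section

/-- A Young function: strictly increasing, convex on `[0,∞)`, vanishing at `0`. -/
def IsYoung (f : ℝ → ℝ) : Prop :=
  StrictMonoOn f (Set.Ici 0) ∧ ConvexOn ℝ (Set.Ici 0) f ∧ f 0 = 0

/-- Legendre transform of a real function (sup over `y ≥ 0`), `ℝ≥0∞`-valued. -/
def Leg (f : ℝ → ℝ) (x : ℝ) : ℝ≥0∞ :=
  ⨆ y : {y : ℝ // 0 ≤ y}, ENNReal.ofReal (x * y - f y)

/-- Legendre transform of an `ℝ≥0∞`-valued function. -/
def LegE (f : ℝ → ℝ≥0∞) (x : ℝ) : ℝ≥0∞ :=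
  ⨆ y : {y : ℝ // 0 ≤ y}, (ENNReal.ofReal (x * y) - f y)

/-- Monotone extension of a real function on `[0,∞)` to `ℝ≥0∞` arguments. -/
def extE (f : ℝ → ℝ) (t : ℝ≥0∞) : ℝ≥0∞ :=
  ⨆ s : {s : ℝ // 0 ≤ s ∧ ENNReal.ofReal s ≤ t}, ENNReal.ofReal (f s)

/-- Monotone extension of an `ℝ≥0∞`-valued function to `ℝ≥0∞` arguments. -/
def extLT (f : ℝ → ℝ≥0∞) (t : ℝ≥0∞) : ℝ≥0∞ :=
  ⨆ s : {s : ℝ // 0 ≤ s ∧ ENNReal.ofReal s ≤ t}, f s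

/-- Generalized (right-continuous) inverse of an `ℝ≥0∞`-valued function. -/
def invE (g : ℝ → ℝ≥0∞) (t : ℝ≥0∞) : ℝ≥0∞ :=
  ⨅ s : {s : ℝ // 0 ≤ s ∧ t ≤ g s}, ENNReal.ofReal s

/-- `ρ(x) = sup_{y ≥ 0} (φ(xy) - ψ(y))/y`. -/
def rhoSup (φ ψ : ℝ → ℝ) (x : ℝ) : ℝ≥0∞ :=
  ⨆ y : {y : ℝ // 0 ≤ y}, ENNReal.ofReal ((φ (x * y) - ψ y) / y)

/-- `ζ(x) = sup_{y ≥ 0} (φ(xy) - ψ(y)/y)`. -/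
def zetaSup (φ ψ : ℝ → ℝ) (x : ℝ) : ℝ≥0∞ :=
  ⨆ y : {y : ℝ // 0 ≤ y}, ENNReal.ofReal (φ (x * y) - ψ y / y)

/-- Domination order on real functions: `f(x) ≤ C₁ g(C₂ x)` for large `x`. -/
def DominR (f g : ℝ → ℝ) : Prop :=
  ∃ C₁ C₂ x₀ : ℝ, 0 < C₁ ∧ 0 < C₂ ∧ 0 < x₀ ∧ ∀ x ≥ x₀, f x ≤ C₁ * g (C₂ * x)

/-- Equivalence of real functions: mutual domination. -/
def EquivR (f g : ℝ → ℝ) : Prop := DominR f g ∧ DominR g f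

/-- Domination order on `ℝ≥0∞`-valued functions. -/
def DominE (f g : ℝ → ℝ≥0∞) : Prop :=
  ∃ C₁ C₂ x₀ : ℝ, 0 < C₁ ∧ 0 < C₂ ∧ 0 < x₀ ∧
    ∀ x ≥ x₀, f x ≤ ENNReal.ofReal C₁ * g (C₂ * x)

/-- Equivalence of `ℝ≥0∞`-valued functions: mutual domination. -/
def EquivE (f g : ℝ → ℝ≥0∞) : Prop := DominE f g ∧ DominE g f

/-! The key point is that `ϑ(y)/y = ζ⁻¹(ψ̃(y))` is nondecreasing. Put `a = ψ̃⁻¹(κ(x))`, so that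
`ϑ(a) = x`. Testing the supremum defining `ϑ*` at `y = a` gives `ϑ*(2x/a) ≥ x`, while for
`s < x/a` the monotone slope forces `s y - ϑ(y) ≤ s a < x` for every `y ≥ 0`. Hence
`(ϑ*)⁻¹(x) ∈ [x/a, 2x/a]`, which is the claim with `K = 1`. -/

theorem ofReal_le_invE {g : ℝ → ℝ≥0∞} {t : ℝ≥0∞} {r : ℝ}
    (h : ∀ s, 0 ≤ s → t ≤ g s → r ≤ s) : ENNReal.ofReal r ≤ invE g t :=
  le_iInf fun s => ENNReal.ofReal_le_ofReal (h s.1 s.2.1 s.2.2)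

theorem invE_le_ofReal {g : ℝ → ℝ≥0∞} {t : ℝ≥0∞} {s : ℝ} (hs : 0 ≤ s) (ht : t ≤ g s) :
    invE g t ≤ ENNReal.ofReal s :=
  iInf_le (fun s : {s : ℝ // 0 ≤ s ∧ t ≤ g s} => ENNReal.ofReal s) ⟨s, hs, ht⟩

theorem ofReal_sub_le_Leg (f : ℝ → ℝ) (s : ℝ) {y : ℝ} (hy : 0 ≤ y) :
    ENNReal.ofReal (s * y - f y) ≤ Leg f s :=
  le_iSup (fun y : {y : ℝ // 0 ≤ y} => ENNReal.ofReal (s * y - f y)) ⟨y, hy⟩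

theorem Leg_le_ofReal {f : ℝ → ℝ} {s c : ℝ} (h : ∀ y, 0 ≤ y → s * y - f y ≤ c) :
    Leg f s ≤ ENNReal.ofReal c :=
  iSup_le fun y => ENNReal.ofReal_le_ofReal (h y.1 y.2)

section SlopeAbove

variable {f : ℝ → ℝ} {a : ℝ}

theorem Leg_le_ofReal_mul_of_slope (ha : 0 < a) (hf : ∀ y, 0 ≤ y → 0 ≤ f y)
    (hslope : ∀ y, a ≤ y → f a * y ≤ f y * a) {s : ℝ} (hs : 0 ≤ s) (hsa : s * a ≤ f a) :
    Leg f s ≤ ENNReal.ofReal (s * a) := by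
  refine Leg_le_ofReal fun y hy => ?_
  rcases le_total y a with hya | hay
  · nlinarith [hf y hy]
  · have hmul : (s * y - f y) * a ≤ 0 := by
      nlinarith [hslope y hay, mul_le_mul_of_nonneg_right hsa hy]
    nlinarith [nonpos_of_mul_nonpos_left hmul ha]

theorem div_le_of_le_Leg (ha : 0 < a) (hf : ∀ y, 0 ≤ y → 0 ≤ f y)
    (hslope : ∀ y, a ≤ y → f a * y ≤ f y * a) {s : ℝ} (hs : 0 ≤ s)
    (hLeg : ENNReal.ofReal (f a) ≤ Leg f s) : f a / a ≤ s := by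
  rw [div_le_iff₀ ha]
  by_contra! hlt
  have hle := hLeg.trans (Leg_le_ofReal_mul_of_slope ha hf hslope hs hlt.le)
  rw [ENNReal.ofReal_le_ofReal_iff (mul_nonneg hs ha.le)] at hle
  exact hle.not_gt hlt

theorem ofReal_div_le_invE_Leg (ha : 0 < a) (hf : ∀ y, 0 ≤ y → 0 ≤ f y)
    (hslope : ∀ y, a ≤ y → f a * y ≤ f y * a) :
    ENNReal.ofReal (f a / a) ≤ invE (Leg f) (ENNReal.ofReal (f a)) :=
  ofReal_le_invE fun _ hs hLeg => div_le_of_le_Leg ha hf hslope hs hLeg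

theorem invE_Leg_le_ofReal_two_mul_div (ha : 0 < a) (hfa : 0 ≤ f a) :
    invE (Leg f) (ENNReal.ofReal (f a)) ≤ ENNReal.ofReal (2 * f a / a) := by
  refine invE_le_ofReal (by positivity) ((ofReal_sub_le_Leg f _ ha.le).trans' ?_)
  rw [div_mul_cancel₀ _ ha.ne']
  exact ENNReal.ofReal_le_ofReal (by linarith)

theorem invE_Leg_mul_mem_Icc (ha : 0 < a) (hf : ∀ y, 0 ≤ y → 0 ≤ f y)
    (hslope : ∀ y, a ≤ y → f a * y ≤ f y * a) :
    ENNReal.ofReal (f a) ≤ invE (Leg f) (ENNReal.ofReal (f a)) * ENNReal.ofReal a ∧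
      invE (Leg f) (ENNReal.ofReal (f a)) * ENNReal.ofReal a ≤ ENNReal.ofReal (2 * f a) := by
  have hmul (r : ℝ) : ENNReal.ofReal (r / a) * ENNReal.ofReal a = ENNReal.ofReal r := by
    rw [← ENNReal.ofReal_mul' ha.le, div_mul_cancel₀ _ ha.ne']
  constructor
  · exact (hmul _).symm.trans_le (mul_le_mul_left (ofReal_div_le_invE_Leg ha hf hslope) _)
  · exact (mul_le_mul_left (invE_Leg_le_ofReal_two_mul_div ha (hf a ha.le)) _).trans_eq (hmul _)

end SlopeAbove

theorem StrictMonoOn.monotoneOn_of_rightInvOn {α β : Type*} [LinearOrder α] [Preorder β]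
    {f : α → β} {g : β → α} {s : Set α} {t : Set β} (hf : StrictMonoOn f s)
    (hg : ∀ x ∈ t, g x ∈ s ∧ f (g x) = x) : MonotoneOn g t := fun u hu v hv huv => by
  rwa [← hf.le_iff_le (hg u hu).1 (hg v hv).1, (hg u hu).2, (hg v hv).2]

theorem stmt7_general (ζ ψ ζinv tψinv κ κinv : ℝ → ℝ)
    (hζ : IsYoung ζ)
    (htψ : StrictMonoOn (fun x => ψ x / x) (Set.Ici 0))
    (htψ0 : ψ 0 / 0 = 0)
    (hζinv : ∀ x ≥ (0:ℝ), 0 ≤ ζinv x ∧ ζ (ζinv x) = x)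
    (htinv : ∀ x ≥ (0:ℝ), 0 ≤ tψinv x ∧ ψ (tψinv x) / tψinv x = x)
    (hκinv : ∀ x ≥ (0:ℝ), κinv x = ζinv x * tψinv x)
    (hκ : ∀ x ≥ (0:ℝ), 0 ≤ κ x ∧ κinv (κ x) = x ∧ κ (κinv x) = x) :
    ∃ K x₀ : ℝ, 0 < K ∧ 0 < x₀ ∧ ∀ x ≥ x₀,
      ENNReal.ofReal (K⁻¹ * x) ≤
        invE (Leg (fun t => κinv (ψ t / t))) (ENNReal.ofReal x) *
          ENNReal.ofReal (tψinv (κ x)) ∧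
      invE (Leg (fun t => κinv (ψ t / t))) (ENNReal.ofReal x) *
          ENNReal.ofReal (tψinv (κ x)) ≤ ENNReal.ofReal (2 * x) := by
  have hψt_nonneg : ∀ y, 0 ≤ y → 0 ≤ ψ y / y := fun y hy =>
    htψ0 ▸ htψ.monotoneOn Set.self_mem_Ici hy hy
  have hζinv_mono : MonotoneOn ζinv (Set.Ici 0) := hζ.1.monotoneOn_of_rightInvOn hζinv
  have hϑ : ∀ y, 0 ≤ y → κinv (ψ y / y) = ζinv (ψ y / y) * y := fun y hy => by
    obtain ⟨hinv_nonneg, hinv⟩ := htinv _ (hψt_nonneg y hy)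
    rw [hκinv _ (hψt_nonneg y hy), htψ.injOn hinv_nonneg hy hinv]
  refine ⟨1, 1, one_pos, one_pos, fun x hx => ?_⟩
  obtain ⟨hκx, hκinv_κx, -⟩ := hκ x (by linarith)
  obtain ⟨ha0, hψa⟩ := htinv (κ x) hκx
  set a := tψinv (κ x)
  have hϑa : κinv (ψ a / a) = x := by rw [hψa, hκinv_κx]
  have ha : 0 < a := ha0.lt_of_ne fun h => by
    rw [hϑ a ha0, ← h, mul_zero] at hϑa
    linarith
  rw [inv_one, one_mul, ← hϑa]
  have hϑ_nonneg : ∀ y, 0 ≤ y → 0 ≤ κinv (ψ y / y) := fun y hy =>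
    hϑ y hy ▸ mul_nonneg (hζinv _ (hψt_nonneg y hy)).1 hy
  refine invE_Leg_mul_mem_Icc ha hϑ_nonneg fun y hay => ?_
  have hy := ha0.trans hay
  have hslope := hζinv_mono (hψt_nonneg a ha0) (hψt_nonneg y hy) (htψ.monotoneOn ha0 hy hay)
  rw [hϑ a ha0, hϑ y hy]
  linarith [mul_le_mul_of_nonneg_right hslope (mul_nonneg ha0 hy)]

/-- With κ⁻¹(x) = ζ⁻¹(x)ψ̃⁻¹(x) and ϑ = κ⁻¹ ∘ ψ̃, there are K, x₀ ∈ (0,∞) with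
K⁻¹x ≤ (ϑ*)⁻¹(x)·ψ̃⁻¹(κ(x)) ≤ 2x for x ≥ x₀. -/
theorem stmt7 (ζ ψ ζinv tψinv κ κinv : ℝ → ℝ)
    (hζ : IsYoung ζ) (hψ : IsYoung ψ)
    (htψ : StrictMonoOn (fun x => ψ x / x) (Set.Ici 0))
    (htψ0 : ψ 0 / 0 = 0)
    (htψi : Tendsto (fun x => ψ x / x) atTop atTop)
    (hζinv : ∀ x ≥ (0:ℝ), 0 ≤ ζinv x ∧ ζ (ζinv x) = x)
    (htinv : ∀ x ≥ (0:ℝ), 0 ≤ tψinv x ∧ ψ (tψinv x) / tψinv x = x)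
    (hκinv : ∀ x ≥ (0:ℝ), κinv x = ζinv x * tψinv x)
    (hκ : ∀ x ≥ (0:ℝ), 0 ≤ κ x ∧ κinv (κ x) = x ∧ κ (κinv x) = x) :
    ∃ K x₀ : ℝ, 0 < K ∧ 0 < x₀ ∧ ∀ x ≥ x₀,
      ENNReal.ofReal (K⁻¹ * x) ≤
        invE (Leg (fun t => κinv (ψ t / t))) (ENNReal.ofReal x) *
          ENNReal.ofReal (tψinv (κ x)) ∧
      invE (Leg (fun t => κinv (ψ t / t))) (ENNReal.ofReal x) *
          ENNReal.ofReal (tψinv (κ x)) ≤ ENNReal.ofReal (2 * x) :=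
  stmt7_general ζ ψ ζinv tψinv κ κinv hζ htψ htψ0 hζinv htinv hκinv hκ
end
end

section
/- Define ρ(x) = sup_{y ≥ 0} (φ(xy) − ψ(y))/y for Young functions φ, ψ with ψ(y)/y → 0 as y → 0 and ψ(1) ≥ 1. Then ρ is a nondecreasing convex function on [0,∞) with values in [0,∞], ρ(0) = 0, and ρ(x) → ∞ as x → ∞ (i.e., ρ is a generalized Young function). -/
open Filter Topology MeasureTheory
open scoped ENNReal
noncomputable section

/-! Each term `(φ (x * y) - ψ y) / y` of the supremum is a nondecreasing convex function of `x`, so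
the supremum is one as well. The term `y = 1` is `φ x - ψ 1`, which tends to `∞` since a convex `φ`
with `φ 0 = 0 < φ 1` grows at least linearly. -/

lemma ENNReal.ofReal_mul_add_mul_le {a b u v : ℝ} (ha : 0 ≤ a) (hb : 0 ≤ b) :
    ENNReal.ofReal (a * u + b * v) ≤
      ENNReal.ofReal a * ENNReal.ofReal u + ENNReal.ofReal b * ENNReal.ofReal v := by
  rw [← ENNReal.ofReal_mul ha, ← ENNReal.ofReal_mul hb]
  exact ENNReal.ofReal_add_le

lemma ConvexOn.map_mul_le_mul {f : ℝ → ℝ} (hf : ConvexOn ℝ (Set.Ici 0) f) (hf0 : f 0 ≤ 0)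
    {t x : ℝ} (ht₀ : 0 ≤ t) (ht₁ : t ≤ 1) (hx : 0 ≤ x) : f (t * x) ≤ t * f x := by
  have h := hf.2 (Set.mem_Ici.2 le_rfl) (Set.mem_Ici.2 hx) (sub_nonneg.2 ht₁) ht₀
    (sub_add_cancel 1 t)
  simp only [smul_eq_mul, mul_zero, zero_add] at h
  linarith [mul_nonpos_of_nonneg_of_nonpos (sub_nonneg.2 ht₁) hf0]

lemma ConvexOn.mul_map_one_le {f : ℝ → ℝ} (hf : ConvexOn ℝ (Set.Ici 0) f) (hf0 : f 0 ≤ 0)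
    {x : ℝ} (hx : 1 ≤ x) : x * f 1 ≤ f x := by
  have hx₀ : 0 < x := one_pos.trans_le hx
  have h := hf.map_mul_le_mul hf0 (inv_nonneg.2 hx₀.le) (inv_le_one_of_one_le₀ hx) hx₀.le
  rw [inv_mul_cancel₀ hx₀.ne'] at h
  rwa [← le_inv_mul_iff₀ hx₀]

namespace IsYoung

variable {f : ℝ → ℝ}

lemma monotoneOn (hf : IsYoung f) : MonotoneOn f (Set.Ici 0) := hf.1.monotoneOn

lemma nonneg (hf : IsYoung f) {x : ℝ} (hx : 0 ≤ x) : 0 ≤ f x :=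
  hf.2.2 ▸ hf.monotoneOn (Set.mem_Ici.2 le_rfl) (Set.mem_Ici.2 hx) hx

lemma tendsto_atTop (hf : IsYoung f) : Tendsto f atTop atTop := by
  have hf1 : 0 < f 1 := hf.2.2 ▸ hf.1 (Set.mem_Ici.2 le_rfl) (Set.mem_Ici.2 zero_le_one) one_pos
  refine tendsto_atTop_mono' _ ?_ (tendsto_id.atTop_mul_const hf1)
  filter_upwards [eventually_ge_atTop 1] with x hx
  exact hf.2.1.mul_map_one_le hf.2.2.le hx

end IsYoung

section rhoSup

variable {φ ψ : ℝ → ℝ}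

lemma rhoSup_zero (hφ0 : φ 0 = 0) (hψ : ∀ y, 0 ≤ y → 0 ≤ ψ y) : rhoSup φ ψ 0 = 0 := by
  refine ENNReal.iSup_eq_zero.2 fun ⟨y, hy⟩ => ENNReal.ofReal_eq_zero.2 ?_
  rw [zero_mul, hφ0, zero_sub]
  exact div_nonpos_of_nonpos_of_nonneg (neg_nonpos.2 (hψ y hy)) hy

lemma rhoSup_monotoneOn (hφ : MonotoneOn φ (Set.Ici 0)) :
    MonotoneOn (rhoSup φ ψ) (Set.Ici 0) := by
  intro x hx y _ hxy
  refine iSup_mono fun ⟨t, ht⟩ => ENNReal.ofReal_le_ofReal ?_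
  gcongr
  exact hφ (Set.mem_Ici.2 (mul_nonneg hx ht)) (Set.mem_Ici.2 (mul_nonneg (hx.trans hxy) ht))
    (mul_le_mul_of_nonneg_right hxy ht)

lemma ofReal_div_le_rhoSup (x : ℝ) {t : ℝ} (ht : 0 ≤ t) :
    ENNReal.ofReal ((φ (x * t) - ψ t) / t) ≤ rhoSup φ ψ x :=
  le_iSup (fun u : {u : ℝ // 0 ≤ u} => ENNReal.ofReal ((φ (x * u) - ψ u) / u)) ⟨t, ht⟩

lemma ofReal_sub_le_rhoSup (x : ℝ) : ENNReal.ofReal (φ x - ψ 1) ≤ rhoSup φ ψ x := by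
  simpa only [mul_one, div_one] using ofReal_div_le_rhoSup (φ := φ) (ψ := ψ) x zero_le_one

lemma rhoSup_convex (hφ : ConvexOn ℝ (Set.Ici 0) φ) {x y a b : ℝ} (hx : 0 ≤ x) (hy : 0 ≤ y)
    (ha : 0 ≤ a) (hb : 0 ≤ b) (hab : a + b = 1) :
    rhoSup φ ψ (a * x + b * y) ≤
      ENNReal.ofReal a * rhoSup φ ψ x + ENNReal.ofReal b * rhoSup φ ψ y := by
  refine iSup_le fun ⟨t, ht⟩ => ?_
  have hφt : φ ((a * x + b * y) * t) ≤ a * φ (x * t) + b * φ (y * t) := by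
    have h := hφ.2 (Set.mem_Ici.2 (mul_nonneg hx ht)) (Set.mem_Ici.2 (mul_nonneg hy ht)) ha hb hab
    simpa only [smul_eq_mul, add_mul, mul_assoc] using h
  have hterm : (φ ((a * x + b * y) * t) - ψ t) / t ≤
      a * ((φ (x * t) - ψ t) / t) + b * ((φ (y * t) - ψ t) / t) :=
    calc (φ ((a * x + b * y) * t) - ψ t) / t
        ≤ (a * φ (x * t) + b * φ (y * t) - ψ t) / t :=
          div_le_div_of_nonneg_right (by linarith) ht
      _ = a * ((φ (x * t) - ψ t) / t) + b * ((φ (y * t) - ψ t) / t) := by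
          linear_combination (ψ t / t) * hab
  calc ENNReal.ofReal ((φ ((a * x + b * y) * t) - ψ t) / t)
      ≤ ENNReal.ofReal (a * ((φ (x * t) - ψ t) / t) + b * ((φ (y * t) - ψ t) / t)) :=
        ENNReal.ofReal_le_ofReal hterm
    _ ≤ _ := ENNReal.ofReal_mul_add_mul_le ha hb
    _ ≤ ENNReal.ofReal a * rhoSup φ ψ x + ENNReal.ofReal b * rhoSup φ ψ y := by
        gcongr <;> exact ofReal_div_le_rhoSup _ ht

lemma tendsto_rhoSup_top (hφ : Tendsto φ atTop atTop) :
    Tendsto (rhoSup φ ψ) atTop (𝓝 ⊤) :=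
  tendsto_nhds_top_mono
    (ENNReal.tendsto_ofReal_atTop.comp (tendsto_atTop_add_const_right _ (-ψ 1) hφ))
    (Eventually.of_forall fun x => by
      simpa only [Function.comp, ← sub_eq_add_neg] using ofReal_sub_le_rhoSup x)

end rhoSup

theorem stmt15_general (φ ψ : ℝ → ℝ) (hφ : IsYoung φ) (hψ : IsYoung ψ) :
    rhoSup φ ψ 0 = 0 ∧
    (∀ x y : ℝ, 0 ≤ x → x ≤ y → rhoSup φ ψ x ≤ rhoSup φ ψ y) ∧
    (∀ x y a b : ℝ, 0 ≤ x → 0 ≤ y → 0 ≤ a → 0 ≤ b → a + b = 1 →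
      rhoSup φ ψ (a * x + b * y) ≤
        ENNReal.ofReal a * rhoSup φ ψ x + ENNReal.ofReal b * rhoSup φ ψ y) ∧
    Tendsto (rhoSup φ ψ) atTop (nhds ⊤) :=
  ⟨rhoSup_zero hφ.2.2 fun _ => hψ.nonneg,
    fun _ _ hx hxy => rhoSup_monotoneOn hφ.monotoneOn hx (Set.mem_Ici.2 (hx.trans hxy)) hxy,
    fun _ _ _ _ hx hy ha hb hab => rhoSup_convex hφ.2.1 hx hy ha hb hab,
    tendsto_rhoSup_top hφ.tendsto_atTop⟩

/-- ρ is a generalized Young function: nondecreasing, convex, ρ(0) = 0, ρ(x) → ∞. -/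
theorem stmt15 (φ ψ : ℝ → ℝ) (hφ : IsYoung φ) (hψ : IsYoung ψ)
    (hψ0 : Tendsto (fun y => ψ y / y) (nhdsWithin 0 (Set.Ioi 0)) (nhds 0))
    (hψ1 : 1 ≤ ψ 1) :
    rhoSup φ ψ 0 = 0 ∧
    (∀ x y : ℝ, 0 ≤ x → x ≤ y → rhoSup φ ψ x ≤ rhoSup φ ψ y) ∧
    (∀ x y a b : ℝ, 0 ≤ x → 0 ≤ y → 0 ≤ a → 0 ≤ b → a + b = 1 →
      rhoSup φ ψ (a * x + b * y) ≤
        ENNReal.ofReal a * rhoSup φ ψ x + ENNReal.ofReal b * rhoSup φ ψ y) ∧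
    Tendsto (rhoSup φ ψ) atTop (nhds ⊤) :=
  stmt15_general φ ψ hφ hψ
end
end
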